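/- arXiv:1412.5413 — 11 statements merged into one kernel-verified Lean document; each statement's English description precedes it below -/
import Mathlib

section
/- Let a, b, and c be positive real numbers such that a + b + c = 1. Then a/b + a/c + b/c + b/a + c/b + c/a + 6 ≥ 2√2·(√((1−a)/a) + √((1−b)/b) + √((1−c)/c)). -/
/-! Since `1 - a = b + c`, the left side is `∑ ((1 - a) / a + 2)`, and each summand dominates
`2 √2 √((1 - a) / a)` by AM-GM: `2 √2 √x ≤ √2 ^ 2 + √x ^ 2 = x + 2`. -/

lemma two_mul_sqrt_two_mul_sqrt_le {x : ℝ} (hx : 0 ≤ x) : 2 * √2 * √x ≤ x + 2 := by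
  have := two_mul_le_add_sq √2 √x
  rwa [Real.sq_sqrt zero_le_two, Real.sq_sqrt hx, add_comm] at this

theorem stmt_0 (a b c : ℝ) (ha : 0 < a) (hb : 0 < b) (hc : 0 < c)
    (habc : a + b + c = 1) :
    a / b + a / c + b / c + b / a + c / b + c / a + 6 ≥
      2 * Real.sqrt 2 *
        (Real.sqrt ((1 - a) / a) + Real.sqrt ((1 - b) / b) + Real.sqrt ((1 - c) / c)) := by
  rw [show 1 - a = b + c by linarith, show 1 - b = a + c by linarith,
    show 1 - c = a + b by linarith, add_div, add_div, add_div]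
  have hA := two_mul_sqrt_two_mul_sqrt_le (x := b / a + c / a) (by positivity)
  have hB := two_mul_sqrt_two_mul_sqrt_le (x := a / b + c / b) (by positivity)
  have hC := two_mul_sqrt_two_mul_sqrt_le (x := a / c + b / c) (by positivity)
  linarith
end

section
/- For all real numbers a, b, c, d each ≥ −1, one has a³ + b³ + c³ + d³ + 1 ≥ (3/4)·(a + b + c + d). -/
/-- The tangent line to `x ^ 3` at `x = 1/2`: `x ^ 3 - (3/4 * x - 1/4) = (x + 1) * (x - 1/2) ^ 2`. -/
theorem tangent_line_le_cube {x : ℝ} (hx : -1 ≤ x) : 3 / 4 * x - 1 / 4 ≤ x ^ 3 := by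
  have h : 0 ≤ (x + 1) * (x - 1 / 2) ^ 2 := mul_nonneg (by linarith) (sq_nonneg _)
  linarith [show (x + 1) * (x - 1 / 2) ^ 2 = x ^ 3 - (3 / 4 * x - 1 / 4) by ring]

theorem stmt_2 (a b c d : ℝ) (ha : -1 ≤ a) (hb : -1 ≤ b) (hc : -1 ≤ c) (hd : -1 ≤ d) :
    a ^ 3 + b ^ 3 + c ^ 3 + d ^ 3 + 1 ≥ (3 / 4) * (a + b + c + d) := by
  linarith [tangent_line_le_cube ha, tangent_line_le_cube hb, tangent_line_le_cube hc,
    tangent_line_le_cube hd]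
end

section
/- Let a, b, c be positive real numbers. Then √(a/(b+c)) + √(b/(c+a)) + √(c/(a+b)) > 2. -/
/-!
Since `√(x/y) = x / √(xy)` and `√(xy) ≤ (x + y)/2`, each summand satisfies
`√(a/(b+c)) ≥ 2a/(a+b+c)`, and these lower bounds add up to exactly `2`. Equality in the
AM-GM step forces `a = b + c`, which cannot hold for two of the three summands at once.
-/

lemma two_mul_div_add_le_sqrt_div {x y : ℝ} (hx : 0 ≤ x) (hy : 0 < y) :
    2 * x / (x + y) ≤ √(x / y) := by
  rw [Real.le_sqrt (by positivity) (by positivity), div_pow, div_le_div_iff₀ (by positivity) hy]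
  nlinarith [mul_nonneg hx (sq_nonneg (x - y))]

lemma two_mul_div_add_lt_sqrt_div {x y : ℝ} (hx : 0 < x) (hy : 0 < y) (hxy : x ≠ y) :
    2 * x / (x + y) < √(x / y) := by
  rw [Real.lt_sqrt (by positivity), div_pow, div_lt_div_iff₀ (by positivity) hy]
  nlinarith [mul_pos hx (sq_pos_of_ne_zero (sub_ne_zero.mpr hxy))]

theorem stmt_5 (a b c : ℝ) (ha : 0 < a) (hb : 0 < b) (hc : 0 < c) :
    Real.sqrt (a / (b + c)) + Real.sqrt (b / (c + a)) + Real.sqrt (c / (a + b)) > 2 := by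
  have hsum : 2 * a / (a + (b + c)) + 2 * b / (b + (c + a)) + 2 * c / (c + (a + b)) = 2 := by
    field_simp
    ring
  have ha_le := two_mul_div_add_le_sqrt_div ha.le (add_pos hb hc)
  have hb_le := two_mul_div_add_le_sqrt_div hb.le (add_pos hc ha)
  have hc_le := two_mul_div_add_le_sqrt_div hc.le (add_pos ha hb)
  by_cases habc : a = b + c
  · have hb_lt := two_mul_div_add_lt_sqrt_div hb (add_pos hc ha) (by linarith)
    linarith
  · have ha_lt := two_mul_div_add_lt_sqrt_div ha (add_pos hb hc) habc
    linarith
end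

section
/- Let a, b, c, d be positive real numbers such that a² + b² + c² + d² = 1. Then √(1−a) + √(1−b) + √(1−c) + √(1−d) ≥ √a + √b + √c + √d. -/
/-!
Tangent line trick: for `0 ≤ x ≤ 1`,
`√(1 - x) - √x ≥ √2 * (1/4 - x ^ 2)`, with equality at `x = 1/2`. Summing over `a, b, c, d`
the right-hand sides add up to `√2 * (1 - (a² + b² + c² + d²)) = 0`.
-/

open Real

lemma add_le_sqrt_two_of_sq_add_sq_eq_one {u v : ℝ} (h : u ^ 2 + v ^ 2 = 1) : u + v ≤ √2 :=
  Real.le_sqrt_of_sq_le (by nlinarith [sq_nonneg (u - v)])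

lemma sqrt_two_le_add_mul_of_sq_add_sq_eq_one {u v : ℝ} (hu : 0 ≤ u) (huv : u ≤ v)
    (h : u ^ 2 + v ^ 2 = 1) : √2 ≤ (u + v) * (v ^ 2 + 1 / 2) := by
  have hv : 0 ≤ v := hu.trans huv
  have hv2 : 1 / 2 ≤ v ^ 2 := by nlinarith
  have hsum : 3 - 2 * v ^ 2 ≤ (u + v) ^ 2 := by nlinarith [mul_le_mul_of_nonneg_left huv hu]
  refine Real.sqrt_le_iff.mpr ⟨by positivity, ?_⟩
  calc 2 ≤ (3 - 2 * v ^ 2) * (v ^ 2 + 1 / 2) ^ 2 := by nlinarith [sq_nonneg (v ^ 2 - 1 / 2)]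
    _ ≤ (u + v) ^ 2 * (v ^ 2 + 1 / 2) ^ 2 := by gcongr
    _ = ((u + v) * (v ^ 2 + 1 / 2)) ^ 2 := by ring

lemma sqrt_two_mul_quarter_sub_pow_four_le {u v : ℝ} (hu : 0 ≤ u) (hv : 0 ≤ v)
    (h : u ^ 2 + v ^ 2 = 1) : √2 * (1 / 4 - v ^ 4) ≤ u - v := by
  have hfactor : u - v - √2 * (1 / 4 - v ^ 4) =
      (u - v) * (2 - √2 * ((u + v) * (v ^ 2 + 1 / 2))) / 2 := by
    linear_combination (√2 * (v ^ 2 + 1 / 2) / 2) * h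
  suffices 0 ≤ (u - v) * (2 - √2 * ((u + v) * (v ^ 2 + 1 / 2))) by linarith
  rcases le_total v u with hvu | huv
  · have hv2 : v ^ 2 ≤ 1 / 2 := by nlinarith
    refine mul_nonneg (by linarith) (sub_nonneg.mpr ?_)
    calc √2 * ((u + v) * (v ^ 2 + 1 / 2)) ≤ √2 * (√2 * 1) := by
          gcongr
          · exact add_le_sqrt_two_of_sq_add_sq_eq_one h
          · linarith
      _ = 2 := by rw [mul_one, Real.mul_self_sqrt zero_le_two]
  · refine mul_nonneg_of_nonpos_of_nonpos (by linarith) (sub_nonpos.mpr ?_)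
    calc 2 = √2 * √2 := (Real.mul_self_sqrt zero_le_two).symm
      _ ≤ √2 * ((u + v) * (v ^ 2 + 1 / 2)) := by
          gcongr
          exact sqrt_two_le_add_mul_of_sq_add_sq_eq_one hu huv h

lemma sqrt_two_mul_quarter_sub_sq_le {x : ℝ} (hx0 : 0 ≤ x) (hx1 : x ≤ 1) :
    √2 * (1 / 4 - x ^ 2) ≤ √(1 - x) - √x := by
  have h := sqrt_two_mul_quarter_sub_pow_four_le (Real.sqrt_nonneg (1 - x)) (Real.sqrt_nonneg x)
    (by rw [Real.sq_sqrt (by linarith), Real.sq_sqrt hx0]; ring)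
  rwa [show √x ^ 4 = x ^ 2 by rw [show 4 = 2 * 2 from rfl, pow_mul, Real.sq_sqrt hx0]] at h

theorem stmt_7 (a b c d : ℝ) (ha : 0 < a) (hb : 0 < b) (hc : 0 < c) (hd : 0 < d)
    (h : a ^ 2 + b ^ 2 + c ^ 2 + d ^ 2 = 1) :
    Real.sqrt (1 - a) + Real.sqrt (1 - b) + Real.sqrt (1 - c) + Real.sqrt (1 - d) ≥
      Real.sqrt a + Real.sqrt b + Real.sqrt c + Real.sqrt d := by
  have le_one {x : ℝ} (hx : x ^ 2 ≤ 1) : x ≤ 1 := by nlinarith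
  have ka := sqrt_two_mul_quarter_sub_sq_le ha.le (le_one (by nlinarith))
  have kb := sqrt_two_mul_quarter_sub_sq_le hb.le (le_one (by nlinarith))
  have kc := sqrt_two_mul_quarter_sub_sq_le hc.le (le_one (by nlinarith))
  have kd := sqrt_two_mul_quarter_sub_sq_le hd.le (le_one (by nlinarith))
  have hsum : √2 * (1 / 4 - a ^ 2) + √2 * (1 / 4 - b ^ 2) + √2 * (1 / 4 - c ^ 2)
      + √2 * (1 / 4 - d ^ 2) = 0 := by
    linear_combination -√2 * h
  linarith
end

section
/- For every real number x with 0 < x < 1, one has √(1−x) − √x ≥ −√2·(x² − 1/4). -/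
/-!
Write `a = √x`, `b = √(1 - x)` and `t = b² - a² = 1 - 2x`. Then `b - a = t / (a + b)` and
`x² - 1/4 = -t (2 - t) / 4`, so the inequality is `t (√2 (2 - t)(a + b) - 4) ≤ 0`.
For `t ≥ 0` this follows from `a + b ≤ √2`. For `t ≤ 0` it needs
`√2 (2 - t)(a + b) ≥ 4`, which follows from `(a + b)² ≥ 2 - t²` and `(2 - t)² (2 - t²) ≥ 8`
on `[-1, 0]`; both bounds are tight at `t = 0`, the point of tangency.
-/

open Real

section QuarterCircle

variable {a b : ℝ}

lemma add_le_sqrt_two_of_sq_add_sq_eq_one_s8 (h : a ^ 2 + b ^ 2 = 1) : a + b ≤ √2 :=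
  (le_abs_self _).trans (abs_le_sqrt (by nlinarith [sq_nonneg (a - b)]))

lemma two_sub_sq_sub_sq_le_sq_add (ha : 0 ≤ a) (hb : 0 ≤ b) (h : a ^ 2 + b ^ 2 = 1) :
    2 - (b ^ 2 - a ^ 2) ^ 2 ≤ (a + b) ^ 2 := by
  have hab : 2 * (a * b) ≤ 1 := by nlinarith [sq_nonneg (a - b)]
  -- the difference is `2ab (1 - 2ab)`
  nlinarith [mul_nonneg (mul_nonneg ha hb) (sub_nonneg.2 hab)]

lemma eight_le_two_sub_sq_mul_two_sub_sq {t : ℝ} (ht₁ : -1 ≤ t) (ht₀ : t ≤ 0) :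
    8 ≤ (2 - t) ^ 2 * (2 - t ^ 2) := by
  -- the difference is `-t (8 + 2t - 4t² + t³)`
  have ht₁' : 0 ≤ 1 + t := by linarith
  nlinarith [mul_nonneg (neg_nonneg.2 ht₀) (add_nonneg (sq_nonneg t) ht₁'),
    mul_nonneg (mul_nonneg (neg_nonneg.2 ht₀) (sq_nonneg t)) ht₁']

theorem neg_sqrt_two_mul_pow_four_sub_le_sub (ha : 0 ≤ a) (hb : 0 ≤ b) (h : a ^ 2 + b ^ 2 = 1) :
    -√2 * (a ^ 4 - 1 / 4) ≤ b - a := by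
  set t := b ^ 2 - a ^ 2 with ht
  have hs : 0 < a + b := by nlinarith
  have hdiff : (b - a) * (a + b) = t := by ring
  have hquartic : a ^ 4 - 1 / 4 = -(t * (2 - t)) / 4 := by
    rw [ht]; linear_combination (3 * a ^ 2 - b ^ 2 + 1) / 4 * h
  suffices t * (√2 * (2 - t) * (a + b) - 4) ≤ 0 by
    rw [hquartic]; nlinarith
  have hsqrt2 : √2 ^ 2 = 2 := sq_sqrt zero_le_two
  rcases le_total 0 t with ht₀ | ht₀
  · have hsum := add_le_sqrt_two_of_sq_add_sq_eq_one_s8 h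
    have hprod : (2 - t) * (a + b) ≤ 2 * √2 :=
      mul_le_mul (by linarith) hsum hs.le zero_le_two
    have hfactor : √2 * (2 - t) * (a + b) ≤ 4 := by
      nlinarith [mul_le_mul_of_nonneg_left hprod (sqrt_nonneg 2)]
    exact mul_nonpos_of_nonneg_of_nonpos ht₀ (by linarith)
  · have hlow := two_sub_sq_sub_sq_le_sq_add ha hb h
    have hpoly := eight_le_two_sub_sq_mul_two_sub_sq (by nlinarith) ht₀
    have hpos : 0 ≤ √2 * (2 - t) * (a + b) :=
      mul_nonneg (mul_nonneg (sqrt_nonneg 2) (by linarith)) hs.le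
    have hfactor : 4 ≤ √2 * (2 - t) * (a + b) := by
      refine le_of_pow_le_pow_left₀ two_ne_zero hpos ?_
      rw [mul_pow, mul_pow, hsqrt2]
      nlinarith [sq_nonneg (2 - t)]
    exact mul_nonpos_of_nonpos_of_nonneg ht₀ (by linarith)

end QuarterCircle

theorem stmt_8 (x : ℝ) (hx0 : 0 < x) (hx1 : x < 1) :
    Real.sqrt (1 - x) - Real.sqrt x ≥ -Real.sqrt 2 * (x ^ 2 - 1 / 4) := by
  have ha : √x ^ 2 = x := sq_sqrt hx0.le
  have hb : √(1 - x) ^ 2 = 1 - x := sq_sqrt (by linarith)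
  have h := neg_sqrt_two_mul_pow_four_sub_le_sub (sqrt_nonneg x) (sqrt_nonneg (1 - x))
    (by rw [ha, hb]; ring)
  rwa [show √x ^ 4 = x ^ 2 by rw [show 4 = 2 * 2 from rfl, pow_mul, ha]] at h
end

section
/- Let a, b, c be positive real numbers such that abc ≥ 1. Then (a + 1/(a+1))·(b + 1/(b+1))·(c + 1/(c+1)) ≥ 27/8. -/
-- `x + 1/(x+1) - 3/2 √x = (√x - 1)² (2x + √x + 2) / (2(x + 1))`.
lemma three_halves_mul_sqrt_le_add_one_div_add_one {x : ℝ} (hx : 0 ≤ x) :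
    3 / 2 * √x ≤ x + 1 / (x + 1) := by
  obtain ⟨t, ht, rfl⟩ : ∃ t, 0 ≤ t ∧ x = t ^ 2 := ⟨√x, Real.sqrt_nonneg x, (Real.sq_sqrt hx).symm⟩
  rw [Real.sqrt_sq ht, add_div' _ _ _ (by positivity), le_div_iff₀ (by positivity)]
  nlinarith [mul_nonneg (sq_nonneg (t - 1)) (by positivity : (0 : ℝ) ≤ 2 * t ^ 2 + t + 2)]

theorem stmt_9 (a b c : ℝ) (ha : 0 < a) (hb : 0 < b) (hc : 0 < c) (habc : a * b * c ≥ 1) :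
    (a + 1 / (a + 1)) * (b + 1 / (b + 1)) * (c + 1 / (c + 1)) ≥ 27 / 8 := by
  have hsqrt : 1 ≤ √(a * b * c) := Real.one_le_sqrt.mpr habc
  calc 27 / 8 ≤ 27 / 8 * √(a * b * c) := le_mul_of_one_le_right (by norm_num) hsqrt
    _ = 3 / 2 * √a * (3 / 2 * √b) * (3 / 2 * √c) := by
      rw [Real.sqrt_mul (by positivity), Real.sqrt_mul ha.le]; ring
    _ ≤ (a + 1 / (a + 1)) * (b + 1 / (b + 1)) * (c + 1 / (c + 1)) := by
      gcongr <;> exact three_halves_mul_sqrt_le_add_one_div_add_one (by positivity)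
end

section
/- For all positive real numbers a, b, c, one has 3a/(b+c) + 4b/(c+a) + 5c/(a+b) ≥ (√3 + 2 + √5)²/2 − 12. -/
/-!
With `x = b + c`, `y = c + a`, `z = a + b` one has `p a / x = p (a + b + c) / x - p`, so the
weighted Nesbitt sum equals `(a + b + c) (p / x + q / y + r / z) - (p + q + r)`. Writing
`p = (√p)²` etc., Titu's form of Cauchy–Schwarz bounds `p / x + q / y + r / z` below by
`(√p + √q + √r)² / (x + y + z)`, and `x + y + z = 2 (a + b + c)`.
-/

theorem sq_add_add_div_le {R : Type*} [Semifield R] [LinearOrder R] [IsStrictOrderedRing R]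
    [ExistsAddOfLE R] (p q r : R) {x y z : R} (hx : 0 < x) (hy : 0 < y) (hz : 0 < z) :
    (p + q + r) ^ 2 / (x + y + z) ≤ p ^ 2 / x + q ^ 2 / y + r ^ 2 / z := by
  have hpos : ∀ i ∈ Finset.univ, 0 < ![x, y, z] i := by
    intro i _
    fin_cases i <;> assumption
  simpa [Fin.sum_univ_three, add_assoc] using
    Finset.sq_sum_div_le_sum_sq_div Finset.univ ![p, q, r] hpos

theorem weighted_nesbitt_sum_eq {K : Type*} [Field K] (p q r : K) {a b c : K}
    (hbc : b + c ≠ 0) (hca : c + a ≠ 0) (hab : a + b ≠ 0) :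
    p * a / (b + c) + q * b / (c + a) + r * c / (a + b) =
      (a + b + c) * (p / (b + c) + q / (c + a) + r / (a + b)) - (p + q + r) := by
  field_simp
  ring

theorem weighted_nesbitt {p q r a b c : ℝ} (hp : 0 ≤ p) (hq : 0 ≤ q) (hr : 0 ≤ r)
    (ha : 0 < a) (hb : 0 < b) (hc : 0 < c) :
    (√p + √q + √r) ^ 2 / 2 - (p + q + r) ≤
      p * a / (b + c) + q * b / (c + a) + r * c / (a + b) := by
  have hs : 0 < a + b + c := by positivity
  have titu := sq_add_add_div_le √p √q √r
    (add_pos hb hc) (add_pos hc ha) (add_pos ha hb)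
  rw [Real.sq_sqrt hp, Real.sq_sqrt hq, Real.sq_sqrt hr,
    show b + c + (c + a) + (a + b) = 2 * (a + b + c) by ring] at titu
  rw [weighted_nesbitt_sum_eq p q r (by positivity) (by positivity) (by positivity)]
  calc (√p + √q + √r) ^ 2 / 2 - (p + q + r)
      = (a + b + c) * ((√p + √q + √r) ^ 2 / (2 * (a + b + c))) - (p + q + r) := by
        field_simp
    _ ≤ (a + b + c) * (p / (b + c) + q / (c + a) + r / (a + b)) - (p + q + r) := by
        gcongr

theorem stmt_11 (a b c : ℝ) (ha : 0 < a) (hb : 0 < b) (hc : 0 < c) :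
    3 * a / (b + c) + 4 * b / (c + a) + 5 * c / (a + b) ≥
      (Real.sqrt 3 + 2 + Real.sqrt 5) ^ 2 / 2 - 12 := by
  have h := weighted_nesbitt (p := 3) (q := 4) (r := 5) (by norm_num) (by norm_num) (by norm_num)
    ha hb hc
  rw [show √(4 : ℝ) = 2 by norm_num] at h
  norm_num at h ⊢
  exact h
end

section
/- Let a, b, c be positive real numbers such that ab + bc + ca = 3. Then (a⁷ − a⁴ + 3)·(b⁵ − b² + 3)·(c⁴ − c + 3) ≥ 27. -/
/-!
Each factor dominates `t ^ 3 + 2`, since `t ^ (m + n) - t ^ m - t ^ n + 1 = (t ^ m - 1) (t ^ n - 1)`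
and the two factors have the same sign for `t ≥ 0`. Hölder's inequality for the triples
`(a³, 1, 1)`, `(1, b³, 1)`, `(1, 1, c³)` bounds the product of these from below by `(a + b + c) ^ 3`,
and `(a + b + c) ^ 2 ≥ 3 (ab + bc + ca) = 9`.
-/

lemma pow_add_pow_le_pow_add_add_one {x : ℝ} (hx : 0 ≤ x) (m n : ℕ) :
    x ^ m + x ^ n ≤ x ^ (m + n) + 1 := by
  have key : 0 ≤ (x ^ m - 1) * (x ^ n - 1) := by
    rcases le_total x 1 with hx1 | hx1
    · exact mul_nonneg_of_nonpos_of_nonpos (by linarith [pow_le_one₀ hx hx1 (n := m)])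
        (by linarith [pow_le_one₀ hx hx1 (n := n)])
    · exact mul_nonneg (by linarith [one_le_pow₀ hx1 (n := m)])
        (by linarith [one_le_pow₀ hx1 (n := n)])
  nlinarith [pow_add x m n]

lemma three_mul_mul_le_pow_three_add {x y z : ℝ} (hx : 0 ≤ x) (hy : 0 ≤ y) (hz : 0 ≤ z) :
    3 * (x * y * z) ≤ x ^ 3 + y ^ 3 + z ^ 3 := by
  have hsq : 0 ≤ (x - y) ^ 2 + (y - z) ^ 2 + (z - x) ^ 2 := by positivity
  nlinarith [mul_nonneg (add_nonneg (add_nonneg hx hy) hz) hsq]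

lemma add_pow_three_le_mul_pow_three_add_two {x y z : ℝ} (hx : 0 ≤ x) (hy : 0 ≤ y)
    (hz : 0 ≤ z) : (x + y + z) ^ 3 ≤ (x ^ 3 + 2) * (y ^ 3 + 2) * (z ^ 3 + 2) := by
  -- `3 x² y ≤ x³ + (x y)³ + 1` for each ordered pair, and two more AM-GM steps for `6 x y z`
  have amgm := @three_mul_mul_le_pow_three_add
  nlinarith [amgm hx (mul_nonneg hx hy) zero_le_one, amgm hy (mul_nonneg hx hy) zero_le_one,
    amgm hy (mul_nonneg hy hz) zero_le_one, amgm hz (mul_nonneg hy hz) zero_le_one,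
    amgm hz (mul_nonneg hz hx) zero_le_one, amgm hx (mul_nonneg hz hx) zero_le_one,
    amgm hx hy hz, amgm (mul_nonneg (mul_nonneg hx hy) hz) zero_le_one zero_le_one]

theorem stmt_13 (a b c : ℝ) (ha : 0 < a) (hb : 0 < b) (hc : 0 < c)
    (h : a * b + b * c + c * a = 3) :
    (a ^ 7 - a ^ 4 + 3) * (b ^ 5 - b ^ 2 + 3) * (c ^ 4 - c + 3) ≥ 27 := by
  have hfa : a ^ 3 + 2 ≤ a ^ 7 - a ^ 4 + 3 := by
    have := pow_add_pow_le_pow_add_add_one ha.le 4 3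
    norm_num at this
    linarith
  have hfb : b ^ 3 + 2 ≤ b ^ 5 - b ^ 2 + 3 := by
    have := pow_add_pow_le_pow_add_add_one hb.le 2 3
    norm_num at this
    linarith
  have hfc : c ^ 3 + 2 ≤ c ^ 4 - c + 3 := by
    have := pow_add_pow_le_pow_add_add_one hc.le 1 3
    norm_num at this
    linarith
  have hfa₀ : 0 ≤ a ^ 7 - a ^ 4 + 3 := by linarith [pow_pos ha 3]
  have hfb₀ : 0 ≤ b ^ 5 - b ^ 2 + 3 := by linarith [pow_pos hb 3]
  have hsum : 3 ≤ a + b + c := by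
    nlinarith [sq_nonneg (a - b), sq_nonneg (b - c), sq_nonneg (c - a)]
  calc (27 : ℝ) = 3 ^ 3 := by norm_num
    _ ≤ (a + b + c) ^ 3 := by gcongr
    _ ≤ (a ^ 3 + 2) * (b ^ 3 + 2) * (c ^ 3 + 2) :=
      add_pow_three_le_mul_pow_three_add_two ha.le hb.le hc.le
    _ ≤ (a ^ 7 - a ^ 4 + 3) * (b ^ 5 - b ^ 2 + 3) * (c ^ 4 - c + 3) := by
      have := mul_nonneg hfa₀ hfb₀
      gcongr
end

section
/- Let a, b, c, d be positive real numbers. Then a/(b+c+d) + b/(c+d+a) + c/(d+a+b) + d/(a+b+c) + (b+c+d)/a + (c+d+a)/b + (d+a+b)/c + (a+b+c)/d ≥ 40/3, with equality when a = b = c = d. In particular the minimum value of this expression over positive a, b, c, d is 40/3. -/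
/-! Writing `s = a + b + c + d`, each of the four pairs of terms has the form `x/y + y/x` with
`y = s - x`. Split it as `(x/y + y/(9x)) + (8/9)(y/x)`: the bracket is at least `2/3` by AM-GM
(equality at `y = 3x`), and `∑ (s - x)/x = s · ∑ 1/x - 4 ≥ 16 - 4` by AM-HM. Hence the sum is at
least `4 · 2/3 + (8/9) · 12 = 40/3`, attained at `a = b = c = d`. -/

lemma two_thirds_add_le_div_add_div {x y : ℝ} (hx : 0 < x) (hy : 0 < y) :
    2 / 3 + 8 / 9 * (y / x) ≤ x / y + y / x := by
  rw [div_add_div _ _ hy.ne' hx.ne', mul_div_assoc', div_add_div _ _ (by norm_num) hx.ne',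
    div_le_div_iff₀ (by positivity) (by positivity)]
  nlinarith [sq_nonneg (3 * x - y), mul_pos hx hy]

lemma sixteen_le_sum_mul_sum_inv {a b c d : ℝ} (ha : 0 < a) (hb : 0 < b) (hc : 0 < c)
    (hd : 0 < d) : 16 ≤ (a + b + c + d) * (a⁻¹ + b⁻¹ + c⁻¹ + d⁻¹) := by
  rw [← sub_nonneg]
  have key : (a + b + c + d) * (a⁻¹ + b⁻¹ + c⁻¹ + d⁻¹) - 16 =
      ((a - b) ^ 2 * c * d + (a - c) ^ 2 * b * d + (a - d) ^ 2 * b * c +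
        (b - c) ^ 2 * a * d + (b - d) ^ 2 * a * c + (c - d) ^ 2 * a * b) / (a * b * c * d) := by
    field_simp
    ring
  rw [key]
  positivity

lemma forty_thirds_le {a b c d : ℝ} (ha : 0 < a) (hb : 0 < b) (hc : 0 < c) (hd : 0 < d) :
    40 / 3 ≤ a / (b + c + d) + b / (c + d + a) + c / (d + a + b) + d / (a + b + c) +
      (b + c + d) / a + (c + d + a) / b + (d + a + b) / c + (a + b + c) / d := by
  have hsum : (b + c + d) / a + (c + d + a) / b + (d + a + b) / c + (a + b + c) / d =
      (a + b + c + d) * (a⁻¹ + b⁻¹ + c⁻¹ + d⁻¹) - 4 := by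
    field_simp
    ring
  have := sixteen_le_sum_mul_sum_inv ha hb hc hd
  have := two_thirds_add_le_div_add_div ha (by positivity : 0 < b + c + d)
  have := two_thirds_add_le_div_add_div hb (by positivity : 0 < c + d + a)
  have := two_thirds_add_le_div_add_div hc (by positivity : 0 < d + a + b)
  have := two_thirds_add_le_div_add_div hd (by positivity : 0 < a + b + c)
  linarith

theorem stmt_15 :
    (∀ a b c d : ℝ, 0 < a → 0 < b → 0 < c → 0 < d →
      a / (b + c + d) + b / (c + d + a) + c / (d + a + b) + d / (a + b + c) +
        (b + c + d) / a + (c + d + a) / b + (d + a + b) / c + (a + b + c) / d ≥ 40 / 3) ∧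
    (∀ a b c d : ℝ, 0 < a → 0 < b → 0 < c → 0 < d → a = b → b = c → c = d →
      a / (b + c + d) + b / (c + d + a) + c / (d + a + b) + d / (a + b + c) +
        (b + c + d) / a + (c + d + a) / b + (d + a + b) / c + (a + b + c) / d = 40 / 3) ∧
    IsLeast
      {y : ℝ | ∃ a b c d : ℝ, 0 < a ∧ 0 < b ∧ 0 < c ∧ 0 < d ∧
        y = a / (b + c + d) + b / (c + d + a) + c / (d + a + b) + d / (a + b + c) +
          (b + c + d) / a + (c + d + a) / b + (d + a + b) / c + (a + b + c) / d}
      (40 / 3) := by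
  refine ⟨fun a b c d ha hb hc hd ↦ forty_thirds_le ha hb hc hd, ?_, ?_, ?_⟩
  · rintro a _ _ _ ha - - - rfl rfl rfl
    field_simp
    ring
  · exact ⟨1, 1, 1, 1, one_pos, one_pos, one_pos, one_pos, by norm_num⟩
  · rintro y ⟨a, b, c, d, ha, hb, hc, hd, rfl⟩
    exact forty_thirds_le ha hb hc hd
end

section
/- Let a, b, c be positive real numbers such that a^(2/3) + b^(2/3) + c^(2/3) = 3. Then a² + b² + c² ≥ a^(4/3) + b^(4/3) + c^(4/3). -/
/-! With `x = a ^ (2/3)` (and likewise `y`, `z`) the claim reads `x² + y² + z² ≤ x³ + y³ + z³`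
under `x + y + z = 3`. Summing the tangent-line bound `x³ - x² ≥ x - 1`, which is
`(x - 1)² (x + 1) ≥ 0`, gives it. -/

lemma sub_one_le_pow_three_sub_sq {x : ℝ} (hx : -1 ≤ x) : x - 1 ≤ x ^ 3 - x ^ 2 := by
  have : 0 ≤ (x - 1) ^ 2 * (x + 1) := mul_nonneg (sq_nonneg _) (by linarith)
  nlinarith

lemma sum_sq_le_sum_pow_three_of_sum_eq_three {x y z : ℝ} (hx : -1 ≤ x) (hy : -1 ≤ y)
    (hz : -1 ≤ z) (h : x + y + z = 3) : x ^ 2 + y ^ 2 + z ^ 2 ≤ x ^ 3 + y ^ 3 + z ^ 3 := by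
  linarith [sub_one_le_pow_three_sub_sq hx, sub_one_le_pow_three_sub_sq hy,
    sub_one_le_pow_three_sub_sq hz]

lemma rpow_two_div_three_pow_three {a : ℝ} (ha : 0 ≤ a) : (a ^ ((2 : ℝ) / 3)) ^ 3 = a ^ 2 := by
  rw [← Real.rpow_mul_natCast ha, ← Real.rpow_natCast]
  norm_num

lemma rpow_two_div_three_sq {a : ℝ} (ha : 0 ≤ a) :
    (a ^ ((2 : ℝ) / 3)) ^ 2 = a ^ ((4 : ℝ) / 3) := by
  rw [← Real.rpow_mul_natCast ha]
  norm_num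

lemma neg_one_le_rpow {a : ℝ} (ha : 0 ≤ a) (p : ℝ) : -1 ≤ a ^ p := by
  linarith [Real.rpow_nonneg ha p]

theorem stmt_17 (a b c : ℝ) (ha : 0 < a) (hb : 0 < b) (hc : 0 < c)
    (h : a ^ ((2 : ℝ) / 3) + b ^ ((2 : ℝ) / 3) + c ^ ((2 : ℝ) / 3) = 3) :
    a ^ 2 + b ^ 2 + c ^ 2 ≥ a ^ ((4 : ℝ) / 3) + b ^ ((4 : ℝ) / 3) + c ^ ((4 : ℝ) / 3) := by
  rw [← rpow_two_div_three_pow_three ha.le, ← rpow_two_div_three_pow_three hb.le,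
    ← rpow_two_div_three_pow_three hc.le, ← rpow_two_div_three_sq ha.le,
    ← rpow_two_div_three_sq hb.le, ← rpow_two_div_three_sq hc.le]
  exact sum_sq_le_sum_pow_three_of_sum_eq_three (neg_one_le_rpow ha.le _)
    (neg_one_le_rpow hb.le _) (neg_one_le_rpow hc.le _) h
end

section
/- Let a, b, c, d be positive real numbers. Then a/(b²+c²+d²) + b/(a²+c²+d²) + c/(a²+b²+d²) + d/(a²+b²+c²) ≥ 4/(a+b+c+d). -/
/-!
Write `p = ∑ xᵢ` and `S = ∑ xᵢ²`. By Titu's lemma applied to `xᵢ / (S - xᵢ²) = xᵢ² / (xᵢ (S - xᵢ²))`,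
the left-hand side is at least `p² / ∑ xᵢ (S - xᵢ²)`, and `p³ - 4 ∑ xᵢ (S - xᵢ²) = ∑ xᵢ (p - 2xᵢ)² ≥ 0`.
-/

open Finset

variable {ι : Type*} (s : Finset ι) (x : ι → ℝ)

lemma cube_sum_sub_four_mul_sum_mul_sum_sq_sub_sq :
    (∑ i ∈ s, x i) ^ 3 - 4 * ∑ i ∈ s, x i * (∑ j ∈ s, x j ^ 2 - x i ^ 2) =
      ∑ i ∈ s, x i * (∑ j ∈ s, x j - 2 * x i) ^ 2 := by
  set p := ∑ i ∈ s, x i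
  set S := ∑ j ∈ s, x j ^ 2
  have lhs : ∑ i ∈ s, x i * (S - x i ^ 2) = S * p - ∑ i ∈ s, x i ^ 3 := by
    simp only [mul_sub, sum_sub_distrib, ← sum_mul, p]
    ring_nf
  have rhs : ∑ i ∈ s, x i * (p - 2 * x i) ^ 2 =
      p ^ 2 * p - 4 * p * S + 4 * ∑ i ∈ s, x i ^ 3 := by
    simp only [show ∀ i, x i * (p - 2 * x i) ^ 2 = p ^ 2 * x i - 4 * p * x i ^ 2 + 4 * x i ^ 3
      from fun i ↦ by ring, sum_add_distrib, sum_sub_distrib, ← mul_sum, S, p]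
  rw [lhs, rhs]
  ring

lemma four_mul_sum_mul_sum_sq_sub_sq_le (hx : ∀ i ∈ s, 0 ≤ x i) :
    4 * ∑ i ∈ s, x i * (∑ j ∈ s, x j ^ 2 - x i ^ 2) ≤ (∑ i ∈ s, x i) ^ 3 := by
  have identity := cube_sum_sub_four_mul_sum_mul_sum_sq_sub_sq s x
  have nonneg : 0 ≤ ∑ i ∈ s, x i * (∑ j ∈ s, x j - 2 * x i) ^ 2 :=
    sum_nonneg fun i hi ↦ mul_nonneg (hx i hi) (sq_nonneg _)
  linarith

theorem four_div_sum_le_sum_div_sum_sq_sub_sq (hx : ∀ i ∈ s, 0 < x i)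
    (hD : ∀ i ∈ s, 0 < ∑ j ∈ s, x j ^ 2 - x i ^ 2) :
    4 / ∑ i ∈ s, x i ≤ ∑ i ∈ s, x i / (∑ j ∈ s, x j ^ 2 - x i ^ 2) := by
  rcases s.eq_empty_or_nonempty with rfl | hs
  · simp
  set S := ∑ j ∈ s, x j ^ 2
  have hp : 0 < ∑ i ∈ s, x i := sum_pos hx hs
  have hg : ∀ i ∈ s, 0 < x i * (S - x i ^ 2) := fun i hi ↦ mul_pos (hx i hi) (hD i hi)
  have hQ : 0 < ∑ i ∈ s, x i * (S - x i ^ 2) := sum_pos hg hs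
  calc 4 / ∑ i ∈ s, x i
      ≤ (∑ i ∈ s, x i) ^ 2 / ∑ i ∈ s, x i * (S - x i ^ 2) := by
        rw [div_le_div_iff₀ hp hQ]
        nlinarith [four_mul_sum_mul_sum_sq_sub_sq_le s x fun i hi ↦ (hx i hi).le]
    _ ≤ ∑ i ∈ s, x i ^ 2 / (x i * (S - x i ^ 2)) := sq_sum_div_le_sum_sq_div s x hg
    _ = ∑ i ∈ s, x i / (S - x i ^ 2) := sum_congr rfl fun i hi ↦ by
        rw [sq, mul_div_mul_left _ _ (hx i hi).ne']

theorem stmt_19 (a b c d : ℝ) (ha : 0 < a) (hb : 0 < b) (hc : 0 < c) (hd : 0 < d) :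
    a / (b ^ 2 + c ^ 2 + d ^ 2) + b / (a ^ 2 + c ^ 2 + d ^ 2) +
      c / (a ^ 2 + b ^ 2 + d ^ 2) + d / (a ^ 2 + b ^ 2 + c ^ 2) ≥
      4 / (a + b + c + d) := by
  have hx : ∀ i ∈ univ, 0 < ![a, b, c, d] i := by
    intro i _
    fin_cases i <;> assumption
  have hD : ∀ i ∈ univ, 0 < ∑ j, ![a, b, c, d] j ^ 2 - ![a, b, c, d] i ^ 2 := by
    intro i _
    fin_cases i <;> simp [Fin.sum_univ_four] <;>
      linarith [pow_pos ha 2, pow_pos hb 2, pow_pos hc 2, pow_pos hd 2]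
  have h := four_div_sum_le_sum_div_sum_sq_sub_sq univ ![a, b, c, d] hx hD
  simp only [Fin.sum_univ_four, Matrix.cons_val] at h
  convert h using 3 <;> ring
end
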